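/- Let 0 < a < ρ and let u : [a, ρ] → ℝ be twice continuously differentiable with u(a) = u(ρ) = 0, u'(a) = α > 0, u(r) > 0 for all r ∈ (a, ρ), and suppose u satisfies the Pucci differential inequalities at every r ∈ (a, ρ). Then u'(ρ) ≤ −√(λ/Λ)·(a/ρ)^{ñ−1}·α. -/

import Mathlib

open Real Set

/-- `P⁺[u](r)`: the Pucci maximal operator `𝓜⁺_{λ,Λ}` evaluated on the Hessian of the
radial function `v(x) = u(|x|)`, expressed through `u'` and `u''`. -/
noncomputable def Pp (n : ℕ) (lam Lam : ℝ) (u' u'' : ℝ → ℝ) (r : ℝ) : ℝ :=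
  Lam * max (u'' r) 0 + lam * min (u'' r) 0 +
    ((n : ℝ) - 1) * (Lam * max (u' r / r) 0 + lam * min (u' r / r) 0)

/-- `P⁻[u](r)`: the Pucci minimal operator `𝓜⁻_{λ,Λ}` evaluated on the Hessian of the
radial function `v(x) = u(|x|)`. -/
noncomputable def Pm (n : ℕ) (lam Lam : ℝ) (u' u'' : ℝ → ℝ) (r : ℝ) : ℝ :=
  lam * max (u'' r) 0 + Lam * min (u'' r) 0 +
    ((n : ℝ) - 1) * (lam * max (u' r / r) 0 + Lam * min (u' r / r) 0)

/-- `u` satisfies the Pucci differential inequalities at `r`: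
`−P⁺[u](r) ≤ |u(r)|^{p−1}u(r) ≤ −P⁻[u](r)`. -/
def PucciIneq (n : ℕ) (lam Lam p : ℝ) (u u' u'' : ℝ → ℝ) (r : ℝ) : Prop :=
  -Pp n lam Lam u' u'' r ≤ |u r| ^ (p - 1) * u r ∧
    |u r| ^ (p - 1) * u r ≤ -Pm n lam Lam u' u'' r

/-
Since the Pucci inequalities force `u'' ≤ 0` wherever `u' ≥ 0`, the derivative `u'` changes sign
exactly once, at some `c ∈ (a, ρ)`. Along the solution the weighted energy
`r ^ (2 (ñ - 1)) (λ u'² / 2 + γ u ^ (p + 1) / (p + 1))` is nondecreasing, with `γ = 1` on the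
rising arc `[a, c]` and `γ = λ / Λ` on the falling arc `[c, ρ]`; the weight is chosen so that
`(ñ - 1) λ = (n - 1) Λ` absorbs the first-order term `(n - 1) Λ u'² / r`. Chaining the energies
at `a`, `c` and `ρ` gives `(λ / Λ) a ^ (2 (ñ - 1)) α² ≤ ρ ^ (2 (ñ - 1)) u'(ρ)²`, and `u'(ρ) ≤ 0`.
-/

lemma abs_rpow_sub_one_mul_of_pos {x : ℝ} (hx : 0 < x) (p : ℝ) : |x| ^ (p - 1) * x = x ^ p := by
  rw [abs_of_pos hx, rpow_sub_one hx.ne', div_mul_cancel₀ _ hx.ne']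

namespace PucciIneq

variable {n : ℕ} {lam Lam p r : ℝ} {u u' u'' : ℝ → ℝ}

lemma deriv2_nonpos_of_deriv_nonneg (h : PucciIneq n lam Lam p u u' u'' r) (hn : 1 ≤ n)
    (hlam : 0 ≤ lam) (hr : 0 < r) (hu : 0 < u r) (hu' : 0 ≤ u' r) : u'' r ≤ 0 := by
  have hk : (0 : ℝ) ≤ n - 1 := sub_nonneg.2 (Nat.one_le_cast.2 hn)
  have hQ : 0 < |u r| ^ (p - 1) * u r := by positivity
  have hVr : 0 ≤ u' r / r := by positivity
  by_contra! hW
  have h2 := h.2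
  simp only [Pm, max_eq_left hW.le, min_eq_right hW.le, max_eq_left hVr, min_eq_right hVr] at h2
  nlinarith [mul_nonneg hk (mul_nonneg hlam hVr), mul_nonneg hlam hW.le]

lemma energyRate_nonneg_of_deriv_nonneg (h : PucciIneq n lam Lam p u u' u'' r) (hn : 1 ≤ n)
    (hlam : 0 ≤ lam) (hLam : 0 ≤ Lam) (hr : 0 < r) (hu : 0 < u r) (hu' : 0 ≤ u' r) :
    0 ≤ Lam * (n - 1) * u' r ^ 2 / r + lam * u' r * u'' r + u r ^ p * u' r := by
  have hk : (0 : ℝ) ≤ n - 1 := sub_nonneg.2 (Nat.one_le_cast.2 hn)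
  have hQ : 0 ≤ u r ^ p := by positivity
  have hVr : 0 ≤ u' r / r := by positivity
  have h1 := h.1
  rw [abs_rpow_sub_one_mul_of_pos hu] at h1
  simp only [Pp, max_eq_left hVr, min_eq_right hVr] at h1
  have hV2 : Lam * (n - 1) * u' r ^ 2 / r = Lam * ((n - 1) * (u' r * (u' r / r))) := by ring
  rw [hV2]
  rcases le_total 0 (u'' r) with hW | hW
  · linarith [mul_nonneg hLam (mul_nonneg hk (mul_nonneg hu' hVr)),
      mul_nonneg (mul_nonneg hlam hu') hW, mul_nonneg hQ hu']
  · simp only [max_eq_right hW, min_eq_left hW] at h1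
    nlinarith [mul_le_mul_of_nonneg_right h1 hu']

lemma energyRate_nonneg_of_deriv_nonpos (h : PucciIneq n lam Lam p u u' u'' r) (hn : 1 ≤ n)
    (hlam : 0 < lam) (hlL : lam ≤ Lam) (hr : 0 < r) (hu : 0 < u r) (hu' : u' r ≤ 0) :
    0 ≤ Lam * (n - 1) * u' r ^ 2 / r + lam * u' r * u'' r + lam / Lam * u r ^ p * u' r := by
  have hk : (0 : ℝ) ≤ n - 1 := sub_nonneg.2 (Nat.one_le_cast.2 hn)
  have hLam : 0 < Lam := hlam.trans_le hlL
  have hQ : 0 ≤ u r ^ p := by positivity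
  have hVr : u' r / r ≤ 0 := div_nonpos_of_nonpos_of_nonneg hu' hr.le
  have h2 := h.2
  rw [abs_rpow_sub_one_mul_of_pos hu] at h2
  simp only [Pm, max_eq_right hVr, min_eq_left hVr] at h2
  have hV2 : Lam * (n - 1) * u' r ^ 2 / r = Lam * ((n - 1) * (u' r * (u' r / r))) := by ring
  have hQV : u r ^ p * u' r ≤ 0 := mul_nonpos_of_nonneg_of_nonpos hQ hu'
  have hratio : lam / Lam ≤ 1 := (div_le_one hLam).2 hlL
  have hkV : 0 ≤ (n - 1) * (u' r * (u' r / r)) :=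
    mul_nonneg hk (mul_nonneg_of_nonpos_of_nonpos hu' hVr)
  rw [hV2]
  rcases le_total 0 (u'' r) with hW | hW
  · simp only [max_eq_left hW, min_eq_right hW] at h2
    nlinarith [mul_le_mul_of_nonpos_right h2 hu',
      mul_nonneg_of_nonpos_of_nonpos (sub_nonpos.2 hratio) hQV]
  · simp only [max_eq_right hW, min_eq_left hW] at h2
    have hLamRate : 0 ≤ Lam * ((n - 1) * (u' r * (u' r / r))) + Lam * (u' r * u'' r)
        + u r ^ p * u' r := by nlinarith [mul_le_mul_of_nonpos_right h2 hu']
    have hlamRate : 0 ≤ lam * ((n - 1) * (u' r * (u' r / r))) + lam * u' r * u'' r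
        + lam / Lam * u r ^ p * u' r := by
      have hscale : lam / Lam * (Lam * ((n - 1) * (u' r * (u' r / r))) + Lam * (u' r * u'' r)
          + u r ^ p * u' r) = lam * ((n - 1) * (u' r * (u' r / r))) + lam * u' r * u'' r
          + lam / Lam * u r ^ p * u' r := by
        field_simp
      exact hscale ▸ mul_nonneg (div_pos hlam hLam).le hLamRate
    nlinarith [mul_le_mul_of_nonneg_right hlL hkV]

end PucciIneq

lemma nonpos_of_deriv_nonpos_where_pos {f f' : ℝ → ℝ} {a b : ℝ}
    (hf : ContinuousOn f (Icc a b)) (hf' : ∀ x ∈ Ioo a b, HasDerivAt f (f' x) x)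
    (hf'_nonpos : ∀ x ∈ Ioo a b, 0 < f x → f' x ≤ 0) (ha : f a ≤ 0) :
    ∀ x ∈ Icc a b, f x ≤ 0 := by
  refine IsClosed.Icc_subset_of_forall_exists_gt (s := f ⁻¹' Iic 0) ?_ ha ?_
  · rw [inter_comm]
    exact hf.preimage_isClosed_of_isClosed isClosed_Icc isClosed_Iic
  rintro x ⟨hfx, hax, hxb⟩ y hxy
  set z := min y b
  have hxz : x < z := lt_min hxy hxb
  by_contra hempty
  have hpos : ∀ w ∈ Ioc x z, 0 < f w := fun w hw =>
    not_le.1 fun hw' => hempty ⟨w, hw', hw.1, hw.2.trans (min_le_left _ _)⟩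
  have hanti : AntitoneOn f (Icc x z) := by
    refine antitoneOn_of_hasDerivWithinAt_nonpos (f' := f') (convex_Icc x z)
      (hf.mono (Icc_subset_Icc hax (min_le_right _ _))) (fun w hw => ?_) (fun w hw => ?_)
    all_goals rw [interior_Icc] at hw
    · exact (hf' w ⟨hax.trans_lt hw.1, hw.2.trans_le (min_le_right _ _)⟩).hasDerivWithinAt
    · exact hf'_nonpos w ⟨hax.trans_lt hw.1, hw.2.trans_le (min_le_right _ _)⟩
        (hpos w ⟨hw.1, hw.2.le⟩)
  have := hanti (left_mem_Icc.2 hxz.le) (right_mem_Icc.2 hxz.le) hxz.le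
  linarith [hpos z ⟨hxz, le_rfl⟩, show f x ≤ 0 from hfx]

lemma exists_pos_Ico_nonpos_Icc {f f' : ℝ → ℝ} {a b : ℝ}
    (hf : ContinuousOn f (Icc a b)) (hf' : ∀ x ∈ Ioo a b, HasDerivAt f (f' x) x)
    (hf'_nonpos : ∀ x ∈ Ioo a b, 0 < f x → f' x ≤ 0) (hzero : ∃ x ∈ Icc a b, f x ≤ 0) :
    ∃ c ∈ Icc a b, (∀ x ∈ Ico a c, 0 < f x) ∧ ∀ x ∈ Icc c b, f x ≤ 0 := by
  set S := Icc a b ∩ f ⁻¹' Iic 0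
  have hS : IsClosed S := hf.preimage_isClosed_of_isClosed isClosed_Icc isClosed_Iic
  have hbdd : BddBelow S := bddBelow_Icc.mono inter_subset_left
  have hc : sInf S ∈ S := hS.csInf_mem hzero hbdd
  refine ⟨sInf S, hc.1, fun x hx => not_le.1 fun hfx => ?_, ?_⟩
  · exact hx.2.not_ge (csInf_le hbdd ⟨⟨hx.1, hx.2.le.trans hc.1.2⟩, hfx⟩)
  · exact nonpos_of_deriv_nonpos_where_pos (hf.mono (Icc_subset_Icc hc.1.1 le_rfl))
      (fun x hx => hf' x ⟨hc.1.1.trans_lt hx.1, hx.2⟩)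
      (fun x hx => hf'_nonpos x ⟨hc.1.1.trans_lt hx.1, hx.2⟩) hc.2

noncomputable def radialEnergy (lam γ p N : ℝ) (u u' : ℝ → ℝ) (r : ℝ) : ℝ :=
  r ^ (2 * N) * (lam * u' r ^ 2 / 2 + γ * u r ^ (p + 1) / (p + 1))

section radialEnergy

variable {lam γ p N r : ℝ} {u u' u'' : ℝ → ℝ}

lemma continuousAt_radialEnergy (hr : 0 < r) (hp : 0 < p + 1) (hu : ContinuousAt u r)
    (hu' : ContinuousAt u' r) : ContinuousAt (radialEnergy lam γ p N u u') r := by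
  unfold radialEnergy
  have : ContinuousAt (fun x => u x ^ (p + 1)) r := hu.rpow_const (Or.inr hp.le)
  have : ContinuousAt (fun x : ℝ => x ^ (2 * N)) r := continuousAt_id.rpow_const (Or.inl hr.ne')
  fun_prop

lemma hasDerivAt_radialEnergy (hr : 0 < r) (hp : 0 < p + 1) (hur : 0 < u r)
    (hu : HasDerivAt u (u' r) r) (hu' : HasDerivAt u' (u'' r) r) :
    HasDerivAt (radialEnergy lam γ p N u u')
      (r ^ (2 * N) * ((N * lam * u' r ^ 2 / r + lam * u' r * u'' r + γ * u r ^ p * u' r)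
        + 2 * N * γ * (u r ^ (p + 1) / (p + 1)) / r)) r := by
  have hpow : HasDerivAt (fun x : ℝ => x ^ (2 * N)) (2 * N * r ^ (2 * N - 1)) r :=
    hasDerivAt_rpow_const (Or.inl hr.ne')
  have hup : HasDerivAt (fun x => u x ^ (p + 1)) (u' r * (p + 1) * u r ^ (p + 1 - 1)) r :=
    hu.rpow_const (Or.inl hur.ne')
  refine (hpow.mul (((hu'.pow 2).const_mul lam).div_const 2 |>.add
    ((hup.const_mul γ).div_const (p + 1)))).congr_deriv ?_
  simp only [Pi.add_apply, Pi.pow_apply, add_sub_cancel_right, rpow_sub_one hr.ne']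
  field_simp
  ring

lemma radialEnergy_monotoneOn {s t : ℝ} (hs : 0 < s) (hp : 0 < p + 1) (hγ : 0 ≤ γ) (hN : 0 ≤ N)
    (hu : ∀ r ∈ Icc s t, HasDerivAt u (u' r) r) (hu' : ∀ r ∈ Icc s t, HasDerivAt u' (u'' r) r)
    (hpos : ∀ r ∈ Ioo s t, 0 < u r)
    (hrate : ∀ r ∈ Ioo s t,
      0 ≤ N * lam * u' r ^ 2 / r + lam * u' r * u'' r + γ * u r ^ p * u' r) :
    MonotoneOn (radialEnergy lam γ p N u u') (Icc s t) := by
  refine monotoneOn_of_hasDerivWithinAt_nonneg (convex_Icc s t) (f' := fun r => r ^ (2 * N) *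
    ((N * lam * u' r ^ 2 / r + lam * u' r * u'' r + γ * u r ^ p * u' r)
      + 2 * N * γ * (u r ^ (p + 1) / (p + 1)) / r))
    (fun r hr => (continuousAt_radialEnergy (hs.trans_le hr.1) hp (hu r hr).continuousAt
      (hu' r hr).continuousAt).continuousWithinAt) (fun r hr => ?_) (fun r hr => ?_)
  all_goals rw [interior_Icc] at hr
  · exact (hasDerivAt_radialEnergy (hs.trans hr.1) hp (hpos r hr) (hu r (Ioo_subset_Icc_self hr))
      (hu' r (Ioo_subset_Icc_self hr))).hasDerivWithinAt
  · have := hs.trans hr.1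
    have := hpos r hr
    have := hrate r hr
    positivity

lemma radialEnergy_of_eq_zero (hp : p + 1 ≠ 0) (h : u r = 0) :
    radialEnergy lam γ p N u u' r = r ^ (2 * N) * (lam * u' r ^ 2 / 2) := by
  simp [radialEnergy, h, zero_rpow hp]

lemma mul_radialEnergy_le {θ : ℝ} (hθ : θ ≤ 1) (hlam : 0 ≤ lam) (hr : 0 ≤ r) :
    θ * radialEnergy lam γ p N u u' r ≤ radialEnergy lam (θ * γ) p N u u' r := by
  have hkin : θ * (lam * u' r ^ 2 / 2) ≤ lam * u' r ^ 2 / 2 :=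
    mul_le_of_le_one_left (by positivity) hθ
  have hpow : 0 ≤ r ^ (2 * N) := rpow_nonneg hr _
  unfold radialEnergy
  calc θ * (r ^ (2 * N) * (lam * u' r ^ 2 / 2 + γ * u r ^ (p + 1) / (p + 1)))
      = r ^ (2 * N) * (θ * (lam * u' r ^ 2 / 2))
          + r ^ (2 * N) * (θ * γ * u r ^ (p + 1) / (p + 1)) := by ring
    _ ≤ r ^ (2 * N) * (lam * u' r ^ 2 / 2)
          + r ^ (2 * N) * (θ * γ * u r ^ (p + 1) / (p + 1)) := by gcongr
    _ = _ := by ring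

end radialEnergy

section Pucci

variable {n : ℕ} {lam Lam p N s t : ℝ} {u u' u'' : ℝ → ℝ}

lemma exists_deriv_pos_Ico_nonpos_Icc_of_pucciIneq (hn : 1 ≤ n) (hlam : 0 ≤ lam) (hs : 0 ≤ s)
    (hst : s < t) (hu : ∀ r ∈ Icc s t, HasDerivAt u (u' r) r)
    (hu' : ∀ r ∈ Icc s t, HasDerivAt u' (u'' r) r) (hus : u s = 0) (hut : u t = 0)
    (hpos : ∀ r ∈ Ioo s t, 0 < u r) (hPucci : ∀ r ∈ Ioo s t, PucciIneq n lam Lam p u u' u'' r) :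
    ∃ c ∈ Icc s t, (∀ r ∈ Ico s c, 0 < u' r) ∧ ∀ r ∈ Icc c t, u' r ≤ 0 := by
  refine exists_pos_Ico_nonpos_Icc (fun r hr => (hu' r hr).continuousAt.continuousWithinAt)
    (fun r hr => hu' r (Ioo_subset_Icc_self hr)) (fun r hr hr' => ?_) ?_
  · exact (hPucci r hr).deriv2_nonpos_of_deriv_nonneg hn hlam (hs.trans_lt hr.1) (hpos r hr)
      hr'.le
  · obtain ⟨x, hx, hx0⟩ := exists_hasDerivAt_eq_zero hst
      (fun r hr => (hu r hr).continuousAt.continuousWithinAt) (hus.trans hut.symm)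
      (fun r hr => hu r (Ioo_subset_Icc_self hr))
    exact ⟨x, Ioo_subset_Icc_self hx, hx0.le⟩

lemma radialEnergy_monotoneOn_of_deriv_nonneg (hn : 1 ≤ n) (hlam : 0 < lam) (hlL : lam ≤ Lam)
    (hp : 0 < p + 1) (hN : N * lam = Lam * (n - 1)) (hs : 0 < s)
    (hu : ∀ r ∈ Icc s t, HasDerivAt u (u' r) r) (hu' : ∀ r ∈ Icc s t, HasDerivAt u' (u'' r) r)
    (hpos : ∀ r ∈ Ioo s t, 0 < u r) (hPucci : ∀ r ∈ Ioo s t, PucciIneq n lam Lam p u u' u'' r)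
    (hrising : ∀ r ∈ Ioo s t, 0 ≤ u' r) :
    MonotoneOn (radialEnergy lam 1 p N u u') (Icc s t) := by
  have hLam : 0 < Lam := hlam.trans_le hlL
  have hN₀ : 0 ≤ N := nonneg_of_mul_nonneg_left
    (hN ▸ mul_nonneg hLam.le (sub_nonneg.2 (Nat.one_le_cast.2 hn))) hlam
  refine radialEnergy_monotoneOn hs hp zero_le_one hN₀ hu hu' hpos fun r hr => ?_
  rw [hN, one_mul]
  exact (hPucci r hr).energyRate_nonneg_of_deriv_nonneg hn hlam.le hLam.le (hs.trans hr.1)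
    (hpos r hr) (hrising r hr)

lemma radialEnergy_monotoneOn_of_deriv_nonpos (hn : 1 ≤ n) (hlam : 0 < lam) (hlL : lam ≤ Lam)
    (hp : 0 < p + 1) (hN : N * lam = Lam * (n - 1)) (hs : 0 < s)
    (hu : ∀ r ∈ Icc s t, HasDerivAt u (u' r) r) (hu' : ∀ r ∈ Icc s t, HasDerivAt u' (u'' r) r)
    (hpos : ∀ r ∈ Ioo s t, 0 < u r) (hPucci : ∀ r ∈ Ioo s t, PucciIneq n lam Lam p u u' u'' r)
    (hfalling : ∀ r ∈ Ioo s t, u' r ≤ 0) :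
    MonotoneOn (radialEnergy lam (lam / Lam) p N u u') (Icc s t) := by
  have hLam : 0 < Lam := hlam.trans_le hlL
  have hN₀ : 0 ≤ N := nonneg_of_mul_nonneg_left
    (hN ▸ mul_nonneg hLam.le (sub_nonneg.2 (Nat.one_le_cast.2 hn))) hlam
  refine radialEnergy_monotoneOn hs hp (by positivity) hN₀ hu hu' hpos fun r hr => ?_
  rw [hN]
  exact (hPucci r hr).energyRate_nonneg_of_deriv_nonpos hn hlam hlL (hs.trans hr.1)
    (hpos r hr) (hfalling r hr)

lemma mul_radialEnergy_le_radialEnergy_of_pucciIneq {c : ℝ} (hn : 1 ≤ n) (hlam : 0 < lam)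
    (hlL : lam ≤ Lam) (hp : 0 < p + 1) (hN : N * lam = Lam * (n - 1)) (hs : 0 < s)
    (hu : ∀ r ∈ Icc s t, HasDerivAt u (u' r) r) (hu' : ∀ r ∈ Icc s t, HasDerivAt u' (u'' r) r)
    (hpos : ∀ r ∈ Ioo s t, 0 < u r) (hPucci : ∀ r ∈ Ioo s t, PucciIneq n lam Lam p u u' u'' r)
    (hc : c ∈ Icc s t) (hrising : ∀ r ∈ Ico s c, 0 < u' r) (hfalling : ∀ r ∈ Icc c t, u' r ≤ 0) :
    lam / Lam * radialEnergy lam 1 p N u u' s ≤ radialEnergy lam (lam / Lam) p N u u' t := by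
  obtain ⟨hsc, hct⟩ := hc
  have hsc' : Icc s c ⊆ Icc s t := Icc_subset_Icc le_rfl hct
  have hct' : Icc c t ⊆ Icc s t := Icc_subset_Icc hsc le_rfl
  have hLam : 0 < Lam := hlam.trans_le hlL
  calc lam / Lam * radialEnergy lam 1 p N u u' s
      ≤ lam / Lam * radialEnergy lam 1 p N u u' c := by
        gcongr
        exact radialEnergy_monotoneOn_of_deriv_nonneg hn hlam hlL hp hN hs
          (fun r hr => hu r (hsc' hr)) (fun r hr => hu' r (hsc' hr))
          (fun r hr => hpos r ⟨hr.1, hr.2.trans_le hct⟩)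
          (fun r hr => hPucci r ⟨hr.1, hr.2.trans_le hct⟩)
          (fun r hr => (hrising r ⟨hr.1.le, hr.2⟩).le)
          (left_mem_Icc.2 hsc) (right_mem_Icc.2 hsc) hsc
    _ ≤ radialEnergy lam (lam / Lam * 1) p N u u' c :=
        mul_radialEnergy_le ((div_le_one hLam).2 hlL) hlam.le (hs.le.trans hsc)
    _ ≤ radialEnergy lam (lam / Lam) p N u u' t := by
        rw [mul_one]
        exact radialEnergy_monotoneOn_of_deriv_nonpos hn hlam hlL hp hN (hs.trans_le hsc)
          (fun r hr => hu r (hct' hr)) (fun r hr => hu' r (hct' hr))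
          (fun r hr => hpos r ⟨hsc.trans_lt hr.1, hr.2⟩)
          (fun r hr => hPucci r ⟨hsc.trans_lt hr.1, hr.2⟩)
          (fun r hr => hfalling r (Ioo_subset_Icc_self hr))
          (left_mem_Icc.2 hct) (right_mem_Icc.2 hct) hct

end Pucci

lemma le_neg_sqrt_mul_rpow_mul {θ a ρ N α x : ℝ} (hθ : 0 ≤ θ) (ha : 0 < a) (hρ : 0 < ρ)
    (hα : 0 ≤ α) (hx : x ≤ 0) (h : θ * (a ^ (2 * N) * α ^ 2) ≤ ρ ^ (2 * N) * x ^ 2) :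
    x ≤ -(√θ * (a / ρ) ^ N * α) := by
  rw [le_neg, ← sq_le_sq₀ (by positivity) (neg_nonneg.2 hx), mul_pow, mul_pow, sq_sqrt hθ,
    ← rpow_natCast, ← rpow_mul (div_pos ha hρ).le, div_rpow ha.le hρ.le, neg_sq]
  rw [mul_comm N, Nat.cast_ofNat]
  calc θ * (a ^ (2 * N) / ρ ^ (2 * N)) * α ^ 2 = θ * (a ^ (2 * N) * α ^ 2) / ρ ^ (2 * N) := by
        ring
    _ ≤ x ^ 2 := (div_le_iff₀' (by positivity)).2 h

theorem exit_slope_upper_bound_general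
    (n : ℕ) (hn : 2 ≤ n) (lam Lam p ntil : ℝ) (hlam : 0 < lam) (hlL : lam ≤ Lam) (hp : 1 < p)
    (hnt : ntil = Lam / lam * ((n : ℝ) - 1) + 1)
    (a ρ α : ℝ) (ha : 0 < a) (haρ : a < ρ) (hα : 0 < α)
    (u u' u'' : ℝ → ℝ)
    (hu : ∀ r ∈ Icc a ρ, HasDerivAt u (u' r) r)
    (hu' : ∀ r ∈ Icc a ρ, HasDerivAt u' (u'' r) r)
    (hua : u a = 0) (huρ : u ρ = 0) (hu'a : u' a = α)
    (hpos : ∀ r ∈ Ioo a ρ, 0 < u r)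
    (hPucci : ∀ r ∈ Ioo a ρ, PucciIneq n lam Lam p u u' u'' r) :
    u' ρ ≤ -(Real.sqrt (lam / Lam) * (a / ρ) ^ (ntil - 1) * α) := by
  have hp₁ : 0 < p + 1 := by linarith
  have hn₁ : 1 ≤ n := by omega
  have hN : (ntil - 1) * lam = Lam * (n - 1) := by
    rw [hnt]
    field_simp
    ring
  obtain ⟨c, hc, hrising, hfalling⟩ := exists_deriv_pos_Ico_nonpos_Icc_of_pucciIneq hn₁
    hlam.le ha.le haρ hu hu' hua huρ hpos hPucci
  have key := mul_radialEnergy_le_radialEnergy_of_pucciIneq hn₁ hlam hlL hp₁ hN ha hu hu' hpos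
    hPucci hc hrising hfalling
  rw [radialEnergy_of_eq_zero hp₁.ne' hua, radialEnergy_of_eq_zero hp₁.ne' huρ, hu'a] at key
  refine le_neg_sqrt_mul_rpow_mul (div_pos hlam (hlam.trans_le hlL)).le ha (ha.trans haρ) hα.le
    (hfalling ρ (right_mem_Icc.2 hc.2)) (le_of_mul_le_mul_right ?_ (half_pos hlam))
  linarith

/-- Estimate (3.5) in the paper: for a positive radial arc vanishing at both endpoints,
`u'(ρ) ≤ −√(λ/Λ) (a/ρ)^{ñ₋−1} α`. -/
theorem exit_slope_upper_bound
    (n : ℕ) (hn : 2 ≤ n) (lam Lam p ntil : ℝ) (hlam : 0 < lam) (hlL : lam ≤ Lam) (hp : 1 < p)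
    (hnt : ntil = Lam / lam * ((n : ℝ) - 1) + 1)
    (a ρ α : ℝ) (ha : 0 < a) (haρ : a < ρ) (hα : 0 < α)
    (u u' u'' : ℝ → ℝ)
    (hu : ∀ r ∈ Icc a ρ, HasDerivAt u (u' r) r)
    (hu' : ∀ r ∈ Icc a ρ, HasDerivAt u' (u'' r) r)
    (hu'' : ContinuousOn u'' (Icc a ρ))
    (hua : u a = 0) (huρ : u ρ = 0) (hu'a : u' a = α)
    (hpos : ∀ r ∈ Ioo a ρ, 0 < u r)
    (hPucci : ∀ r ∈ Ioo a ρ, PucciIneq n lam Lam p u u' u'' r) :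
    u' ρ ≤ -(Real.sqrt (lam / Lam) * (a / ρ) ^ (ntil - 1) * α) :=
  exit_slope_upper_bound_general n hn lam Lam p ntil hlam hlL hp hnt a ρ α ha haρ hα u u' u'' hu hu'
    hua huρ hu'a hpos hPucci
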